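/- Let B be a self-adjoint operator on a Hilbert space H with an orthonormal basis of eigenvectors and discrete spectrum, satisfying ‖Bs‖ ≥ C₁₃‖s‖₁ - C₁₄√T‖s‖ for all s in the domain, where ‖s‖ ≤ ‖s‖₁. Then for any s with P_{≥0}(s) = 0 (APS boundary condition), ⟨s, Bs⟩ ≤ 0, and consequently for the operator Ds = c(s' + Bs) on the half-line (with c unitary, c² = -1, anticommuting with B), ‖Ds‖²_{L²} ≥ ∫₀^∞ (C₁₃‖s(r)‖₁ - C₁₄√T‖s(r)‖)₊² dr, where x₊ = max(x,0). -/

import Mathlib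

open MeasureTheory
open scoped RealInnerProductSpace

set_option maxHeartbeats 1000000 in
/-- cylinder estimate, Step 2 of Section 3d: if the self-adjoint
operator `B` (with orthonormal eigenbasis `b`, eigenvalues `μ`) satisfies the
elliptic estimate `‖Bs‖ ≥ C₁₃‖s‖₁ - C₁₄√T‖s‖`, then any `v` with `P_{≥0}v = 0`
satisfies `⟨v, Bv⟩ ≤ 0`, and for `Ds = c(s' + Bs)` on the half-line with APS
boundary condition `P_{≥0}(s(0)) = 0`,
`‖Ds‖²_{L²} ≥ ∫₀^∞ ((C₁₃‖s(r)‖₁ - C₁₄√T‖s(r)‖)₊)² dr`. -/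
theorem stmt12 {H : Type*} [NormedAddCommGroup H] [InnerProductSpace ℝ H]
    [CompleteSpace H] {ι : Type*} (b : HilbertBasis ι ℝ H)
    (B c : H →L[ℝ] H) (μ : ι → ℝ)
    (hB : ∀ i, B (b i) = μ i • b i)
    (hBsa : ∀ x y, ⟪B x, y⟫ = ⟪x, B y⟫)
    (hciso : ∀ x, ‖c x‖ = ‖x‖)
    (hcskew : ∀ x y, ⟪c x, y⟫ = -⟪x, c y⟫)
    (hc2 : c ∘L c = -(ContinuousLinearMap.id ℝ H))
    (hanti : c ∘L B = -(B ∘L c))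
    (n1 : H → ℝ) (hn1c : Continuous n1) (hn1 : ∀ x, ‖x‖ ≤ n1 x)
    (C₁₃ C₁₄ T : ℝ) (hC₁₃ : 0 < C₁₃) (hC₁₄ : 0 < C₁₄) (hT : 0 < T)
    (hell : ∀ x, C₁₃ * n1 x - C₁₄ * Real.sqrt T * ‖x‖ ≤ ‖B x‖)
    (s : ℝ → H) (hs : ContDiff ℝ (⊤ : ℕ∞) s) (hsupp : HasCompactSupport s)
    (hAPS : ∀ i, 0 ≤ μ i → ⟪b i, s 0⟫ = 0) :
    (∀ v : H, (∀ i, 0 ≤ μ i → ⟪b i, v⟫ = 0) → ⟪v, B v⟫ ≤ 0) ∧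
    (∫ r in Set.Ioi (0 : ℝ),
        (max (C₁₃ * n1 (s r) - C₁₄ * Real.sqrt T * ‖s r‖) 0) ^ 2) ≤
      ∫ r in Set.Ioi (0 : ℝ), ‖c (deriv s r + B (s r))‖ ^ 2 := by
  -- Part 1 : nonpositivity of ⟪v, Bv⟫ under the APS condition
  have part1 : ∀ v : H, (∀ i, 0 ≤ μ i → ⟪b i, v⟫ = 0) → ⟪v, B v⟫ ≤ 0 := by
    intro v hv
    have hsum := b.hasSum_inner_mul_inner v (B v)
    refine hasSum_le (fun i => ?_) hsum hasSum_zero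
    have h1 : ⟪b i, B v⟫ = μ i * ⟪b i, v⟫ := by
      rw [← hBsa, hB, real_inner_smul_left]
    rcases le_or_gt 0 (μ i) with h | h
    · simp [h1, hv i h]
    · have h2 : ⟪v, b i⟫ * ⟪b i, B v⟫ = μ i * ⟪b i, v⟫ ^ 2 := by
        rw [h1, real_inner_comm v (b i)]; ring
      rw [h2]
      exact mul_nonpos_of_nonpos_of_nonneg h.le (sq_nonneg _)
  refine ⟨part1, ?_⟩
  -- regularity facts
  have hsd : Differentiable ℝ s := hs.differentiable (by simp)
  have hscont : Continuous s := hs.continuous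
  have hderiv_cont : Continuous (deriv s) := hs.continuous_deriv (by simp)
  have hBscont : Continuous fun r => B (s r) := B.continuous.comp hscont
  -- the function g r = ⟪s r, B (s r)⟫
  set g : ℝ → ℝ := fun r => ⟪s r, B (s r)⟫ with hgdef
  have hg1 : ContDiff ℝ 1 g := (hs.of_le (by simp)).inner ℝ ((B.contDiff.comp hs).of_le (by simp))
  have hgcs : HasCompactSupport g := by
    have : g = (fun x : H => ⟪x, B x⟫) ∘ s := rfl
    rw [this]
    exact hsupp.comp_left (g := fun x : H => ⟪x, B x⟫) (by simp)
  -- derivative of g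
  have hderivg : ∀ r, deriv g r = 2 * ⟪deriv s r, B (s r)⟫ := by
    intro r
    have hds : HasDerivAt s (deriv s r) r := (hsd r).hasDerivAt
    have hdBs : HasDerivAt (fun t => B (s t)) (B (deriv s r)) r :=
      (B.hasFDerivAt.comp_hasDerivAt r hds)
    have hg' : HasDerivAt g (⟪s r, B (deriv s r)⟫ + ⟪deriv s r, B (s r)⟫) r :=
      hds.inner ℝ hdBs
    rw [hg'.deriv, ← hBsa, real_inner_comm]
    ring
  -- pointwise identity for the integrand
  have hpoint : ∀ r, ‖c (deriv s r + B (s r))‖ ^ 2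
      = ‖deriv s r‖ ^ 2 + ‖B (s r)‖ ^ 2 + deriv g r := by
    intro r
    rw [hciso, hderivg, norm_add_sq_real]
    ring
  -- n1 vanishes at 0
  have hn10 : n1 0 = 0 := by
    have h1 := hell 0
    have h2 := hn1 0
    simp only [norm_zero, map_zero, mul_zero, sub_zero] at h1 h2
    have h3 : C₁₃ * n1 0 ≤ C₁₃ * 0 := by simpa using h1
    have h4 := le_of_mul_le_mul_left h3 hC₁₃
    linarith
  -- integrabilities
  have i1 : IntegrableOn (fun r => ‖deriv s r‖ ^ 2) (Set.Ioi (0:ℝ)) := by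
    refine ((hderiv_cont.norm.pow 2).integrable_of_hasCompactSupport ?_).integrableOn
    exact hsupp.deriv.comp_left (g := fun x : H => ‖x‖ ^ 2) (by simp)
  have i2 : IntegrableOn (fun r => ‖B (s r)‖ ^ 2) (Set.Ioi (0:ℝ)) := by
    refine ((hBscont.norm.pow 2).integrable_of_hasCompactSupport ?_).integrableOn
    have h := hsupp.comp_left (g := fun x : H => ‖B x‖ ^ 2) (by simp)
    exact h
  have i3 : IntegrableOn (deriv g) (Set.Ioi (0:ℝ)) :=
    ((hg1.continuous_deriv le_rfl).integrable_of_hasCompactSupport hgcs.deriv).integrableOn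
  have i0 : IntegrableOn
      (fun r => (max (C₁₃ * n1 (s r) - C₁₄ * Real.sqrt T * ‖s r‖) 0) ^ 2)
      (Set.Ioi (0:ℝ)) := by
    have hcont : Continuous fun r =>
        (max (C₁₃ * n1 (s r) - C₁₄ * Real.sqrt T * ‖s r‖) 0) ^ 2 := by
      apply Continuous.pow
      exact ((continuous_const.mul (hn1c.comp hscont)).sub
        (continuous_const.mul hscont.norm)).max continuous_const
    refine (hcont.integrable_of_hasCompactSupport ?_).integrableOn
    exact hsupp.comp_left (g := fun x : H =>
      (max (C₁₃ * n1 x - C₁₄ * Real.sqrt T * ‖x‖) 0) ^ 2) (by simp [hn10])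
  -- FTC on the half line
  have hftc : ∫ r in Set.Ioi (0:ℝ), deriv g r = - g 0 :=
    hgcs.integral_Ioi_deriv_eq hg1 0
  have hg0 : g 0 ≤ 0 := part1 (s 0) hAPS
  -- pointwise comparison with ‖B (s r)‖²
  have hmono : ∀ r ∈ Set.Ioi (0:ℝ),
      (max (C₁₃ * n1 (s r) - C₁₄ * Real.sqrt T * ‖s r‖) 0) ^ 2 ≤ ‖B (s r)‖ ^ 2 := by
    intro r _
    have h1 : max (C₁₃ * n1 (s r) - C₁₄ * Real.sqrt T * ‖s r‖) 0 ≤ ‖B (s r)‖ :=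
      max_le (hell (s r)) (norm_nonneg _)
    have h2 : (0:ℝ) ≤ max (C₁₃ * n1 (s r) - C₁₄ * Real.sqrt T * ‖s r‖) 0 :=
      le_max_right _ _
    nlinarith
  -- assemble
  have hsplit : ∫ r in Set.Ioi (0:ℝ), ‖c (deriv s r + B (s r))‖ ^ 2
      = (∫ r in Set.Ioi (0:ℝ), ‖deriv s r‖ ^ 2)
        + (∫ r in Set.Ioi (0:ℝ), ‖B (s r)‖ ^ 2)
        + ∫ r in Set.Ioi (0:ℝ), deriv g r := by
    have e1 : ∫ a in Set.Ioi (0:ℝ), (‖deriv s a‖ ^ 2 + ‖B (s a)‖ ^ 2)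
        = (∫ r in Set.Ioi (0:ℝ), ‖deriv s r‖ ^ 2)
          + ∫ r in Set.Ioi (0:ℝ), ‖B (s r)‖ ^ 2 := by
      simpa using integral_add i1 i2
    have e2 : ∫ a in Set.Ioi (0:ℝ), (‖deriv s a‖ ^ 2 + ‖B (s a)‖ ^ 2 + deriv g a)
        = (∫ a in Set.Ioi (0:ℝ), (‖deriv s a‖ ^ 2 + ‖B (s a)‖ ^ 2))
          + ∫ r in Set.Ioi (0:ℝ), deriv g r := by
      simpa using integral_add (i1.add i2) i3
    rw [integral_congr_ae (ae_of_all _ hpoint), e2, e1]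
  have h1nonneg : 0 ≤ ∫ r in Set.Ioi (0:ℝ), ‖deriv s r‖ ^ 2 :=
    setIntegral_nonneg measurableSet_Ioi (fun r _ => sq_nonneg _)
  have hle : (∫ r in Set.Ioi (0:ℝ),
      (max (C₁₃ * n1 (s r) - C₁₄ * Real.sqrt T * ‖s r‖) 0) ^ 2)
      ≤ ∫ r in Set.Ioi (0:ℝ), ‖B (s r)‖ ^ 2 :=
    setIntegral_mono_on i0 i2 measurableSet_Ioi hmono
  rw [hsplit, hftc]
  linarith
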